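/- arXiv:1007.0189 — 5 statements merged into one kernel-verified Lean document; each statement's English description precedes it below -/
import Mathlib

section
/- Let (X,T) be a dynamical system on a compact metric space and x, y ∈ X a proximal pair. Then for every δ > 0, the set N_δ(x,y) = {n ∈ ℤ : d(Tⁿx, Tⁿy) < δ} is thick, i.e., contains arbitrarily long runs of consecutive integers. -/
/-- `S ⊆ ℤ` is thick: it contains arbitrarily long intervals of consecutive integers. -/
def IsThick (S : Set ℤ) : Prop :=
  ∀ m : ℕ, ∃ n : ℤ, ∀ k : ℕ, k ≤ m → n + (k : ℤ) ∈ S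

/-!
Each of the finitely many maps `T⁰, …, Tᵐ` is uniformly continuous on the compact space `X`, so
there is a single `ε > 0` with `d(a, b) < ε → d(Tᵏa, Tᵏb) < δ` for all `k ≤ m`. Proximality
gives an `n` with `d(Tⁿx, Tⁿy) < ε`, and then `n, n + 1, …, n + m` all lie in `N_δ(x, y)`.
-/

namespace Homeomorph

section Group

variable {X : Type*} [TopologicalSpace X]

def toPerm : (X ≃ₜ X) →* Equiv.Perm X where
  toFun := toEquiv
  map_one' := rfl
  map_mul' _ _ := rfl

theorem toEquiv_zpow (T : X ≃ₜ X) (n : ℤ) : T.toEquiv ^ n = (T ^ n).toEquiv :=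
  (map_zpow toPerm T n).symm

end Group

theorem exists_pos_forall_dist_pow_lt {X : Type*} [MetricSpace X] [CompactSpace X]
    (T : X ≃ₜ X) (m : ℕ) {δ : ℝ} (hδ : 0 < δ) :
    ∃ ε > 0, ∀ a b : X, dist a b < ε → ∀ k ≤ m, dist ((T ^ k) a) ((T ^ k) b) < δ := by
  have hequi : UniformEquicontinuous fun k : Fin (m + 1) => ⇑(T ^ (k : ℕ)) :=
    uniformEquicontinuous_finite.mpr fun k =>
      CompactSpace.uniformContinuous_of_continuous (T ^ (k : ℕ)).continuous
  obtain ⟨ε, hε, h⟩ := Metric.uniformEquicontinuous_iff.mp hequi δ hδ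
  exact ⟨ε, hε, fun a b hab k hk => h a b hab ⟨k, Nat.lt_succ_of_le hk⟩⟩

end Homeomorph

theorem proximal_return_times_thick {X : Type*} [MetricSpace X] [CompactSpace X]
    (T : X ≃ₜ X) (x y : X)
    (hprox : ∀ δ > (0 : ℝ), ∃ n : ℤ, dist ((T.toEquiv ^ n) x) ((T.toEquiv ^ n) y) < δ) :
    ∀ δ > (0 : ℝ),
      IsThick {n : ℤ | dist ((T.toEquiv ^ n) x) ((T.toEquiv ^ n) y) < δ} := by
  intro δ hδ m
  obtain ⟨ε, hε, hT⟩ := T.exists_pos_forall_dist_pow_lt m hδ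
  obtain ⟨n, hn⟩ := hprox ε hε
  refine ⟨n, fun k hk => ?_⟩
  have hshift : ∀ z : X, (T ^ (n + k)) z = (T ^ k) ((T ^ n) z) := fun z => by
    rw [add_comm, zpow_add, zpow_natCast, Homeomorph.mul_apply]
  simp only [Homeomorph.toEquiv_zpow, Homeomorph.coe_toEquiv] at hn
  show dist ((T.toEquiv ^ (n + k)) x) ((T.toEquiv ^ (n + k)) y) < δ
  simpa only [Homeomorph.toEquiv_zpow, Homeomorph.coe_toEquiv, hshift]
    using hT _ _ hn k hk
end

section
/- If (X,T) is a weakly mixing dynamical system on a compact metric space (so the proximal relation P(X) is dense in X × X), then RP^[d](X) = X × X for every d ≥ 1. -/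
/-!
Given `(x, y)` and `δ > 0`, let `U` be the product of the `δ`-balls around `x` and `y`, and `W` the
`δ`-neighbourhood of the diagonal. By induction on `d` we find `n ∈ ℤ^d` such that the open set of
`p ∈ U` with `(T × T)^(n·ε) p ∈ W` for all nonzero `ε ∈ {0,1}^d` is nonempty. For the step, the
pairs `q` with `(T × T)^(n·ε) q ∈ W` for *all* `ε`, including `ε = 0`, form an open set containing
the diagonal, so transitivity of `T × T` yields `m` moving a point of the previous set into it;
then `(n, m)` works.
-/

/-- The regionally proximal relation of order `d`. -/
def RP {X : Type*} [MetricSpace X] (T : X ≃ₜ X) (d : ℕ) : Set (X × X) :=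
  {p | ∀ δ > (0 : ℝ), ∃ x' y' : X, ∃ n : Fin d → ℤ,
    dist p.1 x' < δ ∧ dist p.2 y' < δ ∧
    ∀ ε : Fin d → Bool, ε ≠ (fun _ => false) →
      dist ((T.toEquiv ^ (∑ i, if ε i then n i else 0)) x')
           ((T.toEquiv ^ (∑ i, if ε i then n i else 0)) y') < δ}

/-- Weak mixing: the product system `(X × X, T × T)` is topologically transitive. -/
def WeaklyMixing {X : Type*} [TopologicalSpace X] (T : X ≃ₜ X) : Prop :=
  ∀ U V : Set (X × X), IsOpen U → IsOpen V → U.Nonempty → V.Nonempty →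
    ∃ n : ℤ, ((fun p : X × X => ((T.toEquiv ^ n) p.1, (T.toEquiv ^ n) p.2)) '' U ∩ V).Nonempty

section

variable {X : Type*} [TopologicalSpace X]

theorem Homeomorph.toEquiv_zpow_s4 (T : X ≃ₜ X) (k : ℤ) : (T ^ k).toEquiv = T.toEquiv ^ k :=
  map_zpow (⟨⟨Homeomorph.toEquiv, rfl⟩, fun _ _ => rfl⟩ : (X ≃ₜ X) →* Equiv.Perm X) T k

def diagZpow (T : X ≃ₜ X) (k : ℤ) : X × X → X × X :=
  Prod.map ⇑(T.toEquiv ^ k) ⇑(T.toEquiv ^ k)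

theorem continuous_diagZpow (T : X ≃ₜ X) (k : ℤ) : Continuous (diagZpow T k) := by
  rw [diagZpow, ← T.toEquiv_zpow_s4]
  exact (T ^ k).continuous.prodMap (T ^ k).continuous

theorem diagZpow_add_apply (T : X ≃ₜ X) (a b : ℤ) (p : X × X) :
    diagZpow T (a + b) p = diagZpow T a (diagZpow T b p) := by
  simp only [diagZpow, zpow_add]
  rfl

/-- The exponent `n · ε` in `RP`, for a vertex `ε` of the cube `{0,1}^d`. -/
def cubeSum {d : ℕ} (n : Fin d → ℤ) (ε : Fin d → Bool) : ℤ :=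
  ∑ i, if ε i then n i else 0

theorem cubeSum_snoc {d : ℕ} (n : Fin d → ℤ) (m : ℤ) (ε : Fin (d + 1) → Bool) :
    cubeSum (Fin.snoc n m) ε = cubeSum n (Fin.init ε) + if ε (Fin.last d) then m else 0 := by
  simp only [cubeSum, Fin.sum_univ_castSucc, Fin.snoc_castSucc, Fin.snoc_last]
  rfl

def cubeReturnSet (T : X ≃ₜ X) (W : Set (X × X)) {d : ℕ} (n : Fin d → ℤ)
    (S : Set (Fin d → Bool)) : Set (X × X) :=
  {p | ∀ ε ∈ S, diagZpow T (cubeSum n ε) p ∈ W}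

theorem isOpen_cubeReturnSet (T : X ≃ₜ X) {W : Set (X × X)} (hW : IsOpen W) {d : ℕ}
    (n : Fin d → ℤ) (S : Set (Fin d → Bool)) : IsOpen (cubeReturnSet T W n S) := by
  have h : cubeReturnSet T W n S = ⋂ ε ∈ S, diagZpow T (cubeSum n ε) ⁻¹' W := by
    ext p
    simp [cubeReturnSet]
  rw [h]
  exact S.toFinite.isOpen_biInter fun ε _ => hW.preimage (continuous_diagZpow T _)

theorem cubeReturnSet_snoc (T : X ≃ₜ X) (W : Set (X × X)) {d : ℕ} (n : Fin d → ℤ) (m : ℤ)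
    {p : X × X} (hp : p ∈ cubeReturnSet T W n {ε | ε ≠ fun _ => false})
    (hmp : diagZpow T m p ∈ cubeReturnSet T W n Set.univ) :
    p ∈ cubeReturnSet T W (Fin.snoc n m) {ε | ε ≠ fun _ => false} := by
  intro ε hε
  rw [cubeSum_snoc]
  cases hlast : ε (Fin.last d)
  · have hinit : Fin.init ε ≠ fun _ => false := fun h =>
      hε <| funext fun i => Fin.lastCases hlast (fun j => congrFun h j) i
    simpa using hp _ hinit
  · simpa [diagZpow_add_apply] using hmp _ (Set.mem_univ _)

theorem WeaklyMixing.exists_cubeReturnSet_inter_nonempty {T : X ≃ₜ X} (hwm : WeaklyMixing T)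
    {W U : Set (X × X)} (hW : IsOpen W) (hdiag : ∀ x, (x, x) ∈ W) (hU : IsOpen U)
    (hUne : U.Nonempty) (d : ℕ) :
    ∃ n : Fin d → ℤ, (U ∩ cubeReturnSet T W n {ε | ε ≠ fun _ => false}).Nonempty := by
  induction d with
  | zero =>
    exact ⟨Fin.elim0, hUne.mono fun p hp => ⟨hp, fun ε hε => absurd (Subsingleton.elim _ _) hε⟩⟩
  | succ d ih =>
    obtain ⟨n, hV⟩ := ih
    have hG : (cubeReturnSet T W n Set.univ).Nonempty := by
      obtain ⟨⟨x, -⟩, -⟩ := hUne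
      exact ⟨(x, x), fun ε _ => hdiag _⟩
    obtain ⟨m, -, ⟨p, ⟨hpU, hp⟩, rfl⟩, hmp⟩ :=
      hwm _ _ (hU.inter (isOpen_cubeReturnSet T hW n _)) (isOpen_cubeReturnSet T hW n _) hV hG
    exact ⟨Fin.snoc n m, p, hpU, cubeReturnSet_snoc T W n m hp hmp⟩

end

theorem weakly_mixing_RP_univ_general {X : Type*} [MetricSpace X]
    (T : X ≃ₜ X) (hwm : WeaklyMixing T) :
    ∀ d : ℕ, 1 ≤ d → RP T d = Set.univ := by
  intro d _
  refine Set.eq_univ_of_forall fun ⟨x, y⟩ δ hδ => ?_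
  obtain ⟨n, ⟨x', y'⟩, ⟨hx', hy'⟩, hcube⟩ :=
    hwm.exists_cubeReturnSet_inter_nonempty (W := {p | dist p.1 p.2 < δ})
      (isOpen_lt continuous_dist continuous_const) (fun _ => by simpa using hδ)
      (Metric.isOpen_ball.prod Metric.isOpen_ball)
      ⟨(x, y), Metric.mem_ball_self hδ, Metric.mem_ball_self hδ⟩ d
  exact ⟨x', y', n, Metric.mem_ball_comm.mp hx', Metric.mem_ball_comm.mp hy', hcube⟩

theorem weakly_mixing_RP_univ {X : Type*} [MetricSpace X] [CompactSpace X]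
    (T : X ≃ₜ X) (hwm : WeaklyMixing T) :
    ∀ d : ℕ, 1 ≤ d → RP T d = Set.univ :=
  weakly_mixing_RP_univ_general T hwm
end

section
/- Let (X,T) be a minimal dynamical system on a compact metric space, x ∈ X, U an open neighborhood of x, and S = {n ∈ ℤ : Tⁿx ∈ U}. Then for each d ≥ 1, the set {(n₁,...,n_d) ∈ ℤ^d : n₁ε₁ + ⋯ + n_dε_d ∈ S for all (ε₁,...,ε_d) ∈ {0,1}^d} is syndetic in ℤ^d. -/
/-!
The action of `ℤ` on `X` extends to a left action of the Stone–Čech semigroup `βℤ`, continuous in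
the ultrafilter, and similarly for the face action of `ℤ^d` on `X^{2^d}`. A point fixed by an
element of a minimal left ideal returns syndetically to each of its neighbourhoods, by compactness
of the ideal. Minimality of `X` gives an idempotent `p` of a minimal left ideal `L₀ ⊆ βℤ` with
`p x = x`. The ultrafilters on `ℤ^d` whose nonzero face projections all lie in `L₀` form a closed
left ideal; take an idempotent `u` in a minimal left ideal inside it. Each face projection of `u`
is an idempotent of `L₀`, so it is absorbed by `p`, and `w = (p ⊗ ⋯ ⊗ p) + u` has all nonzero face
projections equal to `p`. Hence `w` fixes the diagonal point `x^[d]`.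
-/

open Filter Topology Set

attribute [local instance] Ultrafilter.add Ultrafilter.addSemigroup

namespace Ultrafilter

variable {S H : Type*}

theorem continuous_map (f : S → H) : Continuous (Ultrafilter.map f) :=
  ultrafilterBasis_is_basis.continuous_iff.2 <| Set.forall_mem_range.2 fun t =>
    ultrafilter_isOpen_basic (f ⁻¹' t)

theorem map_const (p : Ultrafilter S) (c : H) : p.map (fun _ => c) = pure c :=
  coe_injective Filter.map_const

theorem pure_add [Add S] (a : S) (q : Ultrafilter S) : pure a + q = q.map (a + ·) :=
  coe_injective <| Filter.ext fun _ => Iff.rfl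

theorem add_pure_zero [AddZeroClass S] (q : Ultrafilter S) : q + pure 0 = q :=
  coe_injective <| Filter.ext fun s => by simp [← Filter.eventually_mem_set, eventually_add]

theorem pure_zero_add [AddZeroClass S] (q : Ultrafilter S) : pure 0 + q = q := by
  rw [pure_add]
  exact coe_injective <| Filter.ext fun _ => by simp

theorem map_add [Add S] [Add H] {F : Type*} [FunLike F S H] [AddHomClass F S H] (σ : F)
    (p q : Ultrafilter S) : (p + q).map σ = p.map σ + q.map σ :=
  coe_injective <| Filter.ext fun s => by
    simp [← Filter.eventually_mem_set, eventually_add, _root_.map_add]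

variable {γ : Type*} [TopologicalSpace γ] [CompactSpace γ] [T2Space γ]

theorem tendsto_extend (f : S → γ) (p : Ultrafilter S) : Tendsto f p (𝓝 (p.extend f)) := by
  simpa [Tendsto] using ultrafilter_extend_eq_iff.1 (rfl : p.extend f = _)

theorem extend_eq_of_tendsto {f : S → γ} {p : Ultrafilter S} {c : γ}
    (h : Tendsto f p (𝓝 c)) : p.extend f = c :=
  ultrafilter_extend_eq_iff.2 <| by simpa [Tendsto] using h

theorem extend_map (f : H → γ) (σ : S → H) (p : Ultrafilter S) :
    (p.map σ).extend f = p.extend (f ∘ σ) :=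
  extend_eq_of_tendsto <| by simpa [coe_map, tendsto_map'_iff] using tendsto_extend (f ∘ σ) p

theorem extend_pi_apply {ι : Type*} {Y : ι → Type*} [∀ i, TopologicalSpace (Y i)]
    [∀ i, CompactSpace (Y i)] [∀ i, T2Space (Y i)] (f : S → ∀ i, Y i) (p : Ultrafilter S)
    (i : ι) : p.extend f i = p.extend (fun s => f s i) :=
  (extend_eq_of_tendsto (tendsto_pi_nhds.1 (tendsto_extend f p) i)).symm

end Ultrafilter

section LeftIdeal

variable {S : Type*} [AddSemigroup S]

structure IsClosedLeftIdeal (L : Set (Ultrafilter S)) : Prop where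
  nonempty : L.Nonempty
  isClosed : IsClosed L
  add_mem : ∀ q, ∀ l ∈ L, q + l ∈ L

-- Minimality is recorded as `L = βS + l` for every `l ∈ L`.
structure IsMinimalLeftIdeal (L : Set (Ultrafilter S)) : Prop extends IsClosedLeftIdeal L where
  exists_add_eq : ∀ l ∈ L, ∀ m ∈ L, ∃ q, q + l = m

theorem isClosedLeftIdeal_univ [Nonempty S] : IsClosedLeftIdeal (univ : Set (Ultrafilter S)) :=
  ⟨⟨pure (Classical.arbitrary S), trivial⟩, isClosed_univ, fun _ _ _ => trivial⟩

theorem isClosedLeftIdeal_range_add_right (l : Ultrafilter S) :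
    IsClosedLeftIdeal (range (· + l)) where
  nonempty := ⟨l + l, l, rfl⟩
  isClosed := (isCompact_range (Ultrafilter.continuous_add_left l)).isClosed
  add_mem := by
    rintro q _ ⟨r, rfl⟩
    exact ⟨q + r, add_assoc q r l⟩

theorem IsClosedLeftIdeal.exists_isMinimalLeftIdeal_subset {L₀ : Set (Ultrafilter S)}
    (h₀ : IsClosedLeftIdeal L₀) : ∃ L ⊆ L₀, IsMinimalLeftIdeal L := by
  obtain ⟨L, hL₀, hLmin⟩ := zorn_superset_nonempty {A | A ⊆ L₀ ∧ IsClosedLeftIdeal A}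
    (fun c hc hchain ⟨A, hA⟩ => by
      have : Nonempty c := ⟨⟨A, hA⟩⟩
      refine ⟨⋂₀ c, ⟨(sInter_subset_of_mem hA).trans (hc hA).1, ⟨?_, ?_, ?_⟩⟩,
        fun _ => sInter_subset_of_mem⟩
      · exact IsCompact.nonempty_sInter_of_directed_nonempty_isCompact_isClosed
          (IsChain.directedOn hchain.symm) (fun U hU => (hc hU).2.nonempty)
          (fun U hU => (hc hU).2.isClosed.isCompact) (fun U hU => (hc hU).2.isClosed)
      · exact isClosed_sInter fun U hU => (hc hU).2.isClosed
      · exact fun q l hl => mem_sInter.2 fun U hU => (hc hU).2.add_mem q l (hl U hU))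
    L₀ ⟨Subset.rfl, h₀⟩
  refine ⟨L, hLmin.prop.1, hLmin.prop.2, fun l hl m hm => ?_⟩
  -- `L` is minimal, so it equals the closed left ideal generated by any of its elements.
  have hsub : range (· + l) ⊆ L := by
    rintro _ ⟨q, rfl⟩
    exact hLmin.prop.2.add_mem q l hl
  rw [hLmin.eq_of_superset ⟨hsub.trans hL₀, isClosedLeftIdeal_range_add_right l⟩ hsub] at hm
  exact hm

theorem IsMinimalLeftIdeal.add_eq_self_of_idempotent {L : Set (Ultrafilter S)}
    (hL : IsMinimalLeftIdeal L) {p c : Ultrafilter S} (hp : p ∈ L) (hc : c ∈ L)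
    (hcc : c + c = c) : p + c = p := by
  obtain ⟨q, rfl⟩ := hL.exists_add_eq c hc p hp
  rw [add_assoc, hcc]

end LeftIdeal

section UltraAct

variable {S Y : Type*} [TopologicalSpace Y]

noncomputable def ultraAct (act : S → Y → Y) (p : Ultrafilter S) (y : Y) : Y :=
  p.extend (act · y)

variable {act : S → Y → Y}

@[simp]
theorem ultraAct_pure [T2Space Y] (s : S) (y : Y) : ultraAct act (pure s) y = act s y :=
  ultrafilter_extend_pure _ s

variable [CompactSpace Y] [T2Space Y]

theorem continuous_ultraAct (y : Y) : Continuous (ultraAct act · y) :=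
  continuous_ultrafilter_extend _

theorem surjective_ultraAct (y : Y) (hy : DenseRange (act · y)) :
    Function.Surjective (ultraAct act · y) := by
  have hclosed : IsClosed (range (ultraAct act · y)) :=
    (isCompact_range (continuous_ultraAct y)).isClosed
  have hsub : range (act · y) ⊆ range (ultraAct act · y) := by
    rintro _ ⟨s, rfl⟩
    exact ⟨pure s, ultraAct_pure s y⟩
  exact fun z => closure_minimal hsub hclosed (hy z)

variable [AddSemigroup S]

theorem ultraAct_pure_add (hadd : ∀ a b y, act (a + b) y = act a (act b y))
    (hcont : ∀ a, Continuous (act a)) (a : S) (q : Ultrafilter S) (y : Y) :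
    ultraAct act (pure a + q) y = act a (ultraAct act q y) := by
  rw [Ultrafilter.pure_add, ultraAct, Ultrafilter.extend_map]
  refine Ultrafilter.extend_eq_of_tendsto ?_
  simpa only [Function.comp_def, hadd, ultraAct] using
    ((hcont a).tendsto _).comp (Ultrafilter.tendsto_extend (act · y) q)

-- Both sides are continuous in `p` and agree on principal ultrafilters.
theorem ultraAct_add (hadd : ∀ a b y, act (a + b) y = act a (act b y))
    (hcont : ∀ a, Continuous (act a)) (p q : Ultrafilter S) (y : Y) :
    ultraAct act (p + q) y = ultraAct act p (ultraAct act q y) := by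
  refine congr_fun (denseRange_pure.equalizer (g := fun p => ultraAct act (p + q) y)
    ((continuous_ultraAct y).comp (Ultrafilter.continuous_add_left q))
    (continuous_ultraAct _) ?_) p
  funext a
  simp [ultraAct_pure_add hadd hcont]

theorem IsClosedLeftIdeal.exists_idempotent_ultraAct_eq {L : Set (Ultrafilter S)}
    (hL : IsClosedLeftIdeal L) (hadd : ∀ a b y, act (a + b) y = act a (act b y))
    (hcont : ∀ a, Continuous (act a)) (hmin : ∀ z, DenseRange (act · z)) (y : Y) :
    ∃ p ∈ L, p + p = p ∧ ultraAct act p y = y := by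
  obtain ⟨ν, hν⟩ := hL.nonempty
  obtain ⟨q, hq⟩ := surjective_ultraAct (ultraAct act ν y) (hmin _) y
  let J := L ∩ (ultraAct act · y) ⁻¹' {y}
  have hclosed : IsClosed J :=
    hL.isClosed.inter (isClosed_singleton.preimage (continuous_ultraAct y))
  obtain ⟨p, ⟨hpL, hpy⟩, hpp⟩ := exists_idempotent_in_compact_add_subsemigroup
    Ultrafilter.continuous_add_left J
    ⟨q + ν, hL.add_mem q ν hν, by simp [ultraAct_add hadd hcont, hq]⟩ hclosed.isCompact
    (by
      rintro a ⟨-, hay⟩ b ⟨hbL, hby⟩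
      exact ⟨hL.add_mem a b hbL, by simp_all [ultraAct_add hadd hcont]⟩)
  exact ⟨p, hpL, hpp, hpy⟩

theorem IsMinimalLeftIdeal.exists_finset_forall_act_add_mem {L : Set (Ultrafilter S)}
    (hL : IsMinimalLeftIdeal L) (hadd : ∀ a b y, act (a + b) y = act a (act b y))
    (hcont : ∀ a, Continuous (act a)) {w : Ultrafilter S} (hwL : w ∈ L) {y : Y}
    (hwy : ultraAct act w y = y) {V : Set Y} (hV : IsOpen V) (hyV : y ∈ V) :
    ∃ t : Finset S, ∀ m, ∃ n ∈ t, act (n + m) y ∈ V := by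
  let O (n : S) : Set (Ultrafilter S) := (ultraAct act · y) ⁻¹' (act n ⁻¹' V)
  have hO (n : S) : IsOpen (O n) := (hV.preimage (hcont n)).preimage (continuous_ultraAct y)
  -- Each `q ∈ L` is sent back to `w` by some `r`, which principal ultrafilters approximate.
  have hcover : L ⊆ ⋃ n, O n := by
    intro q hq
    obtain ⟨r, hr⟩ := hL.exists_add_eq q hq w hwL
    have hr' : r ∈ (ultraAct act · (ultraAct act q y)) ⁻¹' V := by
      simp [← ultraAct_add hadd hcont, hr, hwy, hyV]
    obtain ⟨_, hn, n, rfl⟩ :=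
      denseRange_pure.inter_open_nonempty _ (hV.preimage (continuous_ultraAct _)) ⟨r, hr'⟩
    exact mem_iUnion.2 ⟨n, by simpa [O] using hn⟩
  obtain ⟨t, ht⟩ := hL.isClosed.isCompact.elim_finite_subcover O hO hcover
  refine ⟨t, fun m => ?_⟩
  obtain ⟨n, hnt, hn⟩ := mem_iUnion₂.1 (ht (hL.add_mem (pure m) w hwL))
  refine ⟨n, hnt, ?_⟩
  simpa [O, ultraAct_pure_add hadd hcont, hwy, hadd] using hn

end UltraAct

section Faces

variable {ι S : Type*} [Fintype ι] [AddCommMonoid S]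

def faceSum (ε : ι → Bool) : (ι → S) →+ S where
  toFun n := ∑ i, if ε i then n i else 0
  map_zero' := by simp
  map_add' a b := by simp only [Pi.add_apply, ← Finset.sum_add_distrib, ite_add_ite, add_zero]

theorem faceSum_single [DecidableEq ι] (ε : ι → Bool) (i : ι) (z : S) :
    faceSum ε (Pi.single i z) = if ε i then z else 0 := by
  rw [faceSum, AddMonoidHom.coe_mk, ZeroHom.coe_mk, Finset.sum_eq_single i] <;>
    simp +contextual

theorem faceSum_of_forall_false {ε : ι → Bool} (hε : ¬∃ i, ε i = true) (n : ι → S) :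
    faceSum ε n = 0 := by
  simp_all [faceSum]

theorem exists_map_faceSum_eq_ite {p : Ultrafilter S} (hpp : p + p = p) :
    ∃ w : Ultrafilter (ι → S), ∀ ε : ι → Bool,
      w.map (faceSum ε) = if ∃ i, ε i = true then p else pure 0 := by
  classical
  -- The witness is `p ⊗ ⋯ ⊗ p`, the sum of the images of `p` under the coordinate embeddings.
  suffices ∀ s : Finset ι, ∃ w : Ultrafilter (ι → S), ∀ ε : ι → Bool,
      w.map (faceSum ε) = if ∃ i ∈ s, ε i = true then p else pure 0 by
    simpa using this Finset.univ
  intro s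
  induction s using Finset.induction_on with
  | empty => exact ⟨pure 0, fun ε => by simp⟩
  | insert a s _ ih =>
    obtain ⟨w, hw⟩ := ih
    refine ⟨p.map (Pi.single a) + w, fun ε => ?_⟩
    rw [Ultrafilter.map_add, hw, Ultrafilter.map_map]
    by_cases ha : ε a = true <;> by_cases hs : ∃ i ∈ s, ε i = true <;>
      simp [Function.comp_def, faceSum_single, ha, hs, hpp, Ultrafilter.map_const,
        Ultrafilter.add_pure_zero, Ultrafilter.pure_zero_add]

theorem IsClosedLeftIdeal.setOf_map_faceSum_mem {L₀ : Set (Ultrafilter S)}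
    (hL₀ : IsClosedLeftIdeal L₀) :
    IsClosedLeftIdeal {w : Ultrafilter (ι → S) |
      ∀ ε : ι → Bool, (∃ i, ε i = true) → w.map (faceSum ε) ∈ L₀} where
  nonempty := by
    obtain ⟨p, hpL₀, hpp⟩ := exists_idempotent_in_compact_add_subsemigroup
      Ultrafilter.continuous_add_left L₀ hL₀.nonempty hL₀.isClosed.isCompact
      (fun a _ b hb => hL₀.add_mem a b hb)
    obtain ⟨w, hw⟩ := exists_map_faceSum_eq_ite (ι := ι) hpp
    exact ⟨w, fun ε hε => by simpa [hw ε, hε] using hpL₀⟩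
  isClosed := by
    simp only [ofPred_forall]
    exact isClosed_iInter fun ε => isClosed_iInter fun _ =>
      hL₀.isClosed.preimage (Ultrafilter.continuous_map _)
  add_mem q l hl ε hε := by
    rw [Ultrafilter.map_add]
    exact hL₀.add_mem _ _ (hl ε hε)

theorem IsMinimalLeftIdeal.exists_isMinimalLeftIdeal_map_faceSum_eq {L₀ : Set (Ultrafilter S)}
    (hL₀ : IsMinimalLeftIdeal L₀) {p : Ultrafilter S} (hpL₀ : p ∈ L₀) (hpp : p + p = p) :
    ∃ L : Set (Ultrafilter (ι → S)), IsMinimalLeftIdeal L ∧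
      ∃ w ∈ L, ∀ ε : ι → Bool, (∃ i, ε i = true) → w.map (faceSum ε) = p := by
  obtain ⟨L, hLsub, hL⟩ :=
    hL₀.toIsClosedLeftIdeal.setOf_map_faceSum_mem (ι := ι).exists_isMinimalLeftIdeal_subset
  obtain ⟨u, huL, huu⟩ := exists_idempotent_in_compact_add_subsemigroup
    Ultrafilter.continuous_add_left L hL.nonempty hL.isClosed.isCompact
    (fun a _ b hb => hL.add_mem a b hb)
  obtain ⟨w₀, hw₀⟩ := exists_map_faceSum_eq_ite (ι := ι) hpp
  -- Every face projection of `u` is an idempotent of `L₀`, hence absorbed by `p`.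
  refine ⟨L, hL, w₀ + u, hL.add_mem w₀ u huL, fun ε hε => ?_⟩
  rw [Ultrafilter.map_add, hw₀, if_pos hε]
  exact hL₀.add_eq_self_of_idempotent hpL₀ (hLsub huL ε hε) (by rw [← Ultrafilter.map_add, huu])

end Faces

section FaceAction

variable {ι S X : Type*} [Fintype ι] [AddCommMonoid S]

-- `faceAct act n` is the face transformation `∏ j, (T_j^[d]) ^ n j` of the paper.
def faceAct (act : S → X → X) (n : ι → S) (y : (ι → Bool) → X) : (ι → Bool) → X :=
  fun ε => act (faceSum ε n) (y ε)

variable {act : S → X → X}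

theorem faceAct_add (hadd : ∀ a b y, act (a + b) y = act a (act b y)) (m n : ι → S)
    (y : (ι → Bool) → X) : faceAct act (m + n) y = faceAct act m (faceAct act n y) := by
  funext ε
  simp [faceAct, hadd]

variable [TopologicalSpace X]

theorem continuous_faceAct (hcont : ∀ a, Continuous (act a)) (n : ι → S) :
    Continuous (faceAct (ι := ι) act n) :=
  continuous_pi fun ε => (hcont _).comp (continuous_apply ε)

variable [CompactSpace X] [T2Space X]

theorem ultraAct_faceAct_apply (w : Ultrafilter (ι → S)) (y : (ι → Bool) → X) (ε : ι → Bool) :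
    ultraAct (faceAct act) w y ε = ultraAct act (w.map (faceSum ε)) (y ε) := by
  rw [ultraAct, Ultrafilter.extend_pi_apply, ultraAct, Ultrafilter.extend_map]
  rfl

theorem ultraAct_faceAct_const (hzero : ∀ y, act 0 y = y) {p : Ultrafilter S} {x : X}
    (hpx : ultraAct act p x = x) {w : Ultrafilter (ι → S)}
    (hw : ∀ ε : ι → Bool, (∃ i, ε i = true) → w.map (faceSum ε) = p) :
    ultraAct (faceAct act) w (fun _ => x) = fun _ => x := by
  funext ε
  rw [ultraAct_faceAct_apply]
  by_cases hε : ∃ i, ε i = true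
  · rw [hw ε hε, hpx]
  · simp [funext (faceSum_of_forall_false hε), Ultrafilter.map_const, hzero]

end FaceAction

theorem Homeomorph.continuous_toEquiv_zpow {X : Type*} [TopologicalSpace X] (T : X ≃ₜ X)
    (n : ℤ) : Continuous ⇑(T.toEquiv ^ n) := by
  have : T.toEquiv ^ n = (T ^ n).toEquiv :=
    (map_zpow (⟨⟨Homeomorph.toEquiv, rfl⟩, fun _ _ => rfl⟩ : (X ≃ₜ X) →* Equiv.Perm X) T n).symm
  rw [this]
  exact (T ^ n).continuous

theorem cube_return_times_syndetic_general {X : Type*} [MetricSpace X] [CompactSpace X]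
    (T : X ≃ₜ X)
    (hmin : ∀ x : X, Dense {y : X | ∃ n : ℤ, y = (T.toEquiv ^ n) x})
    (x : X) (U : Set X) (hU : IsOpen U) (hxU : x ∈ U)
    (d : ℕ) :
    ∃ F : Finset (Fin d → ℤ),
      ∀ m : Fin d → ℤ, ∃ f ∈ F, ∃ s : Fin d → ℤ,
        (∀ ε : Fin d → Bool,
          (T.toEquiv ^ (∑ i, if ε i then s i else 0)) x ∈ U) ∧
        m = s + f := by
  let act (n : ℤ) : X → X := ⇑(T.toEquiv ^ n)
  have hadd (a b : ℤ) (y : X) : act (a + b) y = act a (act b y) := by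
    simp [act, zpow_add, Equiv.Perm.mul_apply]
  have hdense (z : X) : DenseRange (act · z) := by
    simpa only [DenseRange, range, eq_comm] using hmin z
  obtain ⟨L₀, -, hL₀⟩ := (isClosedLeftIdeal_univ (S := ℤ)).exists_isMinimalLeftIdeal_subset
  obtain ⟨p, hpL₀, hpp, hpx⟩ := hL₀.toIsClosedLeftIdeal.exists_idempotent_ultraAct_eq hadd
    T.continuous_toEquiv_zpow hdense x
  obtain ⟨L, hL, w, hwL, hw⟩ :=
    hL₀.exists_isMinimalLeftIdeal_map_faceSum_eq (ι := Fin d) hpL₀ hpp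
  obtain ⟨t, ht⟩ := hL.exists_finset_forall_act_add_mem (faceAct_add hadd)
    (continuous_faceAct T.continuous_toEquiv_zpow) hwL
    (ultraAct_faceAct_const (fun _ => rfl) hpx hw)
    (isOpen_set_pi finite_univ fun _ _ => hU) fun _ _ => hxU
  refine ⟨t.image (-·), fun m => ?_⟩
  obtain ⟨n, hnt, hn⟩ := ht m
  exact ⟨-n, Finset.mem_image_of_mem _ hnt, n + m, fun ε => hn ε (mem_univ ε), by abel⟩

theorem cube_return_times_syndetic {X : Type*} [MetricSpace X] [CompactSpace X]
    (T : X ≃ₜ X)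
    (hmin : ∀ x : X, Dense {y : X | ∃ n : ℤ, y = (T.toEquiv ^ n) x})
    (x : X) (U : Set X) (hU : IsOpen U) (hxU : x ∈ U)
    (d : ℕ) (hd : 1 ≤ d) :
    ∃ F : Finset (Fin d → ℤ),
      ∀ m : Fin d → ℤ, ∃ f ∈ F, ∃ s : Fin d → ℤ,
        (∀ ε : Fin d → Bool,
          (T.toEquiv ^ (∑ i, if ε i then s i else 0)) x ∈ U) ∧
        m = s + f :=
  cube_return_times_syndetic_general T hmin x U hU hxU d
end

section
/- Let (X,T) be a dynamical system and d ≥ 1. The dynamical parallelepiped set Q^[d](X) is invariant under the Euclidean permutations of X^{2^d}, i.e., under the coordinate permutations of {0,1}^d induced by permuting the d digits and by flipping any digit (0 ↔ 1 in a fixed coordinate). -/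
/-- The dynamical parallelepiped set `Q^[d](X)`. -/
def Qcube {X : Type*} [TopologicalSpace X] (T : X ≃ₜ X) (d : ℕ) :
    Set ((Fin d → Bool) → X) :=
  closure {y | ∃ (x : X) (n : Fin d → ℤ),
    y = fun ε => (T.toEquiv ^ (∑ i, if ε i then n i else 0)) x}

/-!
A continuous reindexing of coordinates preserves a closure as soon as it maps the generating
cubes `ε ↦ T^(n·ε) x` into generating cubes. Permuting digits by `σ` turns the cube of `(x, n)`
into that of `(x, n ∘ σ⁻¹)`. Flipping digit `j` uses `n_j (1 - ε_j) = n_j - n_j ε_j`: it turns the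
cube of `(x, n)` into that of `(T^{n_j} x, n')`, where `n'` is `n` with `n_j` negated.
-/

section CubePoints

variable {X : Type*} [TopologicalSpace X] (T : X ≃ₜ X) {d : ℕ}

def cubePoint (x : X) (n : Fin d → ℤ) : (Fin d → Bool) → X :=
  fun ε => (T.toEquiv ^ (∑ i, if ε i then n i else 0)) x

theorem comp_mem_Qcube {τ : (Fin d → Bool) → Fin d → Bool}
    (hτ : ∀ x n, ∃ x' n', cubePoint T x n ∘ τ = cubePoint T x' n')
    {y : (Fin d → Bool) → X} (hy : y ∈ Qcube T d) : y ∘ τ ∈ Qcube T d := by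
  have hcont : Continuous fun z : (Fin d → Bool) → X => z ∘ τ :=
    continuous_pi fun ε => continuous_apply (τ ε)
  refine map_mem_closure (f := fun z => z ∘ τ) hcont hy ?_
  rintro _ ⟨x, n, rfl⟩
  exact hτ x n

theorem cubePoint_comp_perm (σ : Equiv.Perm (Fin d)) (x : X) (n : Fin d → ℤ) :
    (cubePoint T x n ∘ fun ε i => ε (σ i)) = cubePoint T x (n ∘ σ.symm) := by
  funext ε
  simp only [cubePoint, Function.comp_apply]
  congr 2
  exact Fintype.sum_equiv σ _ _ fun i => by simp

theorem cubePoint_comp_flip (j : Fin d) (x : X) (n : Fin d → ℤ) :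
    (cubePoint T x n ∘ fun ε i => if i = j then !ε i else ε i) =
      cubePoint T ((T.toEquiv ^ n j) x) (Function.update n j (-n j)) := by
  funext ε
  have hterm : ∀ i, (if (if i = j then !ε i else ε i) then n i else 0) =
      (if ε i then Function.update n j (-n j) i else 0) + if i = j then n i else 0 := by
    intro i
    by_cases hij : i = j
    · subst hij
      cases ε i <;> simp
    · simp [hij]
  simp only [cubePoint, Function.comp_apply, hterm, Finset.sum_add_distrib,
    Finset.sum_ite_eq', Finset.mem_univ, if_true, zpow_add, Equiv.Perm.mul_apply]

end CubePoints

theorem Qcube_euclidean_invariant_general {X : Type*} [MetricSpace X]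
    (T : X ≃ₜ X) (d : ℕ) :
    (∀ σ : Equiv.Perm (Fin d), ∀ y ∈ Qcube T d,
      (fun ε : Fin d → Bool => y (fun i => ε (σ i))) ∈ Qcube T d) ∧
    (∀ j : Fin d, ∀ y ∈ Qcube T d,
      (fun ε : Fin d → Bool => y (fun i => if i = j then !ε i else ε i)) ∈ Qcube T d) :=
  ⟨fun σ _ hy => comp_mem_Qcube T (fun x n => ⟨x, _, cubePoint_comp_perm T σ x n⟩) hy,
    fun j _ hy => comp_mem_Qcube T (fun x n => ⟨_, _, cubePoint_comp_flip T j x n⟩) hy⟩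

theorem Qcube_euclidean_invariant {X : Type*} [MetricSpace X] [CompactSpace X]
    (T : X ≃ₜ X) (d : ℕ) (hd : 1 ≤ d) :
    (∀ σ : Equiv.Perm (Fin d), ∀ y ∈ Qcube T d,
      (fun ε : Fin d → Bool => y (fun i => ε (σ i))) ∈ Qcube T d) ∧
    (∀ j : Fin d, ∀ y ∈ Qcube T d,
      (fun ε : Fin d → Bool => y (fun i => if i = j then !ε i else ε i)) ∈ Qcube T d) :=
  Qcube_euclidean_invariant_general T d
end

section
/- Let (X,T) be a transitive dynamical system with transitive point x. Then Q^[d](X) equals the closed orbit of the diagonal point x^[d] = (x,...,x) under the parallelepiped group G^[d] generated by the diagonal transformation T^[d] and the face transformations T_1^[d], ..., T_d^[d]. -/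
/-- The `j`-th face transformation of the cube space `X^{2^d}`. -/
def faceEquiv {X : Type*} (T : X ≃ X) (d : ℕ) (j : Fin d) :
    Equiv.Perm ((Fin d → Bool) → X) :=
  Equiv.piCongrRight (fun ε : Fin d → Bool => if ε j then T else Equiv.refl X)

/-- The diagonal transformation of the cube space `X^{2^d}`. -/
def diagEquiv {X : Type*} (T : X ≃ X) (d : ℕ) :
    Equiv.Perm ((Fin d → Bool) → X) :=
  Equiv.piCongrRight (fun _ : Fin d → Bool => T)

/-- The parallelepiped group `G^[d]`: generated by the diagonal transformation
and the face transformations. -/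
def parallelepipedGroup {X : Type*} (T : X ≃ X) (d : ℕ) :
    Subgroup (Equiv.Perm ((Fin d → Bool) → X)) :=
  Subgroup.closure ({diagEquiv T d} ∪ {g | ∃ j : Fin d, g = faceEquiv T d j})

/-!
The elements of `G^[d]` are exactly the maps acting on the coordinate `ε`
by `T^(m + n·ε)` for `m ∈ ℤ`, `n ∈ ℤ^d`. Hence the `G^[d]`-orbit of `x^[d]` consists of the points
`(T^(n·ε) (T^m x))_ε`, which lie in `Q^[d](X)`; conversely, for fixed `n` the map
`z ↦ (T^(n·ε) z)_ε` is continuous, so density of the orbit of `x` puts its whole range, and with it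
`Q^[d](X)`, in the closure of the `G^[d]`-orbit.
-/

open Equiv

section Parallelepiped

variable {X : Type*}

/-- The exponent `n·ε` of the paper. -/
def cubeExponent {d : ℕ} (n : Fin d → ℤ) (ε : Fin d → Bool) : ℤ :=
  ∑ i, if ε i then n i else 0

lemma cubeExponent_add {d : ℕ} (n n' : Fin d → ℤ) (ε : Fin d → Bool) :
    cubeExponent (n + n') ε = cubeExponent n ε + cubeExponent n' ε := by
  simp only [cubeExponent, ← Finset.sum_add_distrib]
  exact Finset.sum_congr rfl fun i _ => by split_ifs <;> simp

lemma cubeExponent_single {d : ℕ} (j : Fin d) (k : ℤ) (ε : Fin d → Bool) :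
    cubeExponent (Pi.single j k) ε = if ε j then k else 0 := by
  rw [cubeExponent, Finset.sum_eq_single j (fun i _ hi => by simp [hi]) (by simp)]
  simp

/-- `(m, n) ↦ (T^[d])^m ∘ ∏ i, (T_i^[d])^(n i)`. -/
def parallelepipedHom (T : Perm X) (d : ℕ) :
    Multiplicative (ℤ × (Fin d → ℤ)) →* Perm ((Fin d → Bool) → X) where
  toFun a := piCongrRight fun ε => T ^ (a.toAdd.1 + cubeExponent a.toAdd.2 ε)
  map_one' := by ext; simp [cubeExponent]
  map_mul' a b := by
    ext w ε
    simp [cubeExponent_add, add_add_add_comm, zpow_add, Perm.mul_apply]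

lemma parallelepipedHom_apply (T : Perm X) {d : ℕ} (a : Multiplicative (ℤ × (Fin d → ℤ)))
    (w : (Fin d → Bool) → X) (ε : Fin d → Bool) :
    parallelepipedHom T d a w ε = (T ^ (a.toAdd.1 + cubeExponent a.toAdd.2 ε)) (w ε) :=
  rfl

lemma diagEquiv_eq_parallelepipedHom (T : Perm X) (d : ℕ) :
    diagEquiv T d = parallelepipedHom T d (.ofAdd (1, 0)) := by
  ext w ε
  simp [parallelepipedHom_apply, cubeExponent, diagEquiv]

lemma faceEquiv_eq_parallelepipedHom (T : Perm X) (d : ℕ) (j : Fin d) :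
    faceEquiv T d j = parallelepipedHom T d (.ofAdd (0, Pi.single j 1)) := by
  ext w ε
  by_cases h : ε j <;> simp [parallelepipedHom_apply, cubeExponent_single, faceEquiv, h]

lemma closure_parallelepipedGenerators_eq_top (d : ℕ) :
    Subgroup.closure ({.ofAdd (1, 0)} ∪ {a | ∃ j : Fin d, a = .ofAdd (0, Pi.single j 1)}) =
      (⊤ : Subgroup (Multiplicative (ℤ × (Fin d → ℤ)))) := by
  refine eq_top_iff.2 fun a _ => ?_
  have hdecomp :
      a = .ofAdd (1, 0) ^ a.toAdd.1 * ∏ i, .ofAdd (0, Pi.single i 1) ^ a.toAdd.2 i := by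
    apply Multiplicative.toAdd.injective
    ext <;> simp [toAdd_prod, Prod.fst_sum, Prod.snd_sum, Finset.sum_apply, Pi.single_apply]
  rw [hdecomp]
  exact mul_mem (zpow_mem (Subgroup.subset_closure (.inl rfl)) _)
    (Subgroup.prod_mem _ fun i _ => zpow_mem (Subgroup.subset_closure (.inr ⟨i, rfl⟩)) _)

theorem parallelepipedGroup_eq_range (T : Perm X) (d : ℕ) :
    parallelepipedGroup T d = (parallelepipedHom T d).range := by
  rw [MonoidHom.range_eq_map, ← closure_parallelepipedGenerators_eq_top, MonoidHom.map_closure,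
    parallelepipedGroup, Set.image_union, Set.image_singleton, diagEquiv_eq_parallelepipedHom]
  congr 2
  ext g
  simp [faceEquiv_eq_parallelepipedHom, eq_comm]

lemma parallelepipedGroup_orbit_const (T : Perm X) (d : ℕ) (x : X) :
    {w | ∃ g ∈ parallelepipedGroup T d, w = g (fun _ => x)} =
      {w | ∃ (m : ℤ) (n : Fin d → ℤ), w = fun ε => (T ^ (m + cubeExponent n ε)) x} := by
  rw [parallelepipedGroup_eq_range]
  ext w
  constructor
  · rintro ⟨_, ⟨a, rfl⟩, rfl⟩
    exact ⟨a.toAdd.1, a.toAdd.2, rfl⟩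
  · rintro ⟨m, n, rfl⟩
    exact ⟨_, ⟨.ofAdd (m, n), rfl⟩, rfl⟩

end Parallelepiped

namespace Homeomorph

variable {X : Type*} [TopologicalSpace X]

def toPermHom : (X ≃ₜ X) →* Perm X where
  toFun := Homeomorph.toEquiv
  map_one' := rfl
  map_mul' _ _ := rfl

lemma continuous_toEquiv_zpow_s16 (T : X ≃ₜ X) (k : ℤ) : Continuous (T.toEquiv ^ k) :=
  map_zpow toPermHom T k ▸ (T ^ k).continuous

end Homeomorph

theorem Qcube_eq_G_orbit_closure_general {X : Type*} [MetricSpace X]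
    (T : X ≃ₜ X) (x : X)
    (htrans : Dense {y : X | ∃ n : ℤ, y = (T.toEquiv ^ n) x})
    (d : ℕ) :
    Qcube T d =
      closure {w | ∃ g ∈ parallelepipedGroup T.toEquiv d,
        w = g (fun _ : Fin d → Bool => x)} := by
  rw [parallelepipedGroup_orbit_const]
  refine (closure_minimal ?_ isClosed_closure).antisymm (closure_mono ?_)
  · rintro _ ⟨x', n, rfl⟩
    have hcont : Continuous fun z (ε : Fin d → Bool) => (T.toEquiv ^ cubeExponent n ε) z :=
      continuous_pi fun ε => T.continuous_toEquiv_zpow_s16 _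
    refine closure_mono ?_ (hcont.range_subset_closure_image_dense htrans ⟨x', rfl⟩)
    rintro _ ⟨_, ⟨m, rfl⟩, rfl⟩
    exact ⟨m, n, funext fun ε => by rw [add_comm, zpow_add, Perm.mul_apply]⟩
  · rintro _ ⟨m, n, rfl⟩
    exact ⟨(T.toEquiv ^ m) x, n, funext fun ε => by
      rw [add_comm, zpow_add, Perm.mul_apply]; rfl⟩

theorem Qcube_eq_G_orbit_closure {X : Type*} [MetricSpace X] [CompactSpace X]
    (T : X ≃ₜ X) (x : X)
    (htrans : Dense {y : X | ∃ n : ℤ, y = (T.toEquiv ^ n) x})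
    (d : ℕ) (hd : 1 ≤ d) :
    Qcube T d =
      closure {w | ∃ g ∈ parallelepipedGroup T.toEquiv d,
        w = g (fun _ : Fin d → Bool => x)} :=
  Qcube_eq_G_orbit_closure_general T x htrans d
end
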